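/- Let K be a field and M a finite J-trivial monoid that is generated (as a monoid) by its idempotents. Then the Jacobson radical of MonoidAlgebra K M is equal to the two-sided ideal of MonoidAlgebra K M generated by the set {g·h − h·g : g, h ∈ M}. -/

import Mathlib

/-- The `J`-preorder on a monoid: `x ≤_J y` iff `x = u * y * v` for some `u, v`. -/
def leJ {M : Type*} [Monoid M] (x y : M) : Prop := ∃ u v : M, x = u * y * v

/-- A monoid is `J`-trivial if `M x M = M y M` implies `x = y`. -/
def JTrivial (M : Type*) [Monoid M] : Prop :=
  ∀ x y : M, {z : M | ∃ u v : M, z = u * x * v} = {z : M | ∃ u v : M, z = u * y * v} → x = y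

/-!
Let `~` be the congruence on `M` generated by `g * h ~ h * g`. As `M` is generated by idempotents,
`L = M / ~` is a finite commutative monoid of idempotents, a semilattice, and the commutator ideal
`C` is the kernel of `K[M] → K[L]`. For `J`-trivial `M` and `m ∈ M`, the indicator of
`{u | u * m = m}` is a character `χₘ` of `K[M]`; in particular the indicators of `{q | q * p = p}`,
`p ∈ L`, are characters of `K[L]`.

`rad ⊆ C`: characters kill the radical, and the characters of `K[L]` separate its elements (test at a
`J`-maximal element of the support), so the radical maps to `0` in `K[L]`.

`C ⊆ rad`: if `d ∈ C` then `χₘ d = 0`, hence `d * m` lies in the span of the `z <_J m`; by induction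
along `<_J` every element of `C` is nilpotent, and a two-sided nil ideal lies in the radical.
-/

open MonoidAlgebra

theorem Ideal.mem_jacobson_bot_of_forall_isNilpotent_mul {R : Type*} [Ring R] {x : R}
    (h : ∀ y, IsNilpotent (y * x)) : x ∈ Ideal.jacobson (⊥ : Ideal R) := by
  refine Ideal.mem_jacobson_iff.2 fun y => ?_
  obtain ⟨z, hz⟩ := (h y).isUnit_add_one.exists_left_inv
  refine ⟨z, ?_⟩
  rw [Submodule.mem_bot, mul_assoc, ← mul_add_one, hz, sub_self]

theorem AlgHom.map_eq_zero_of_mem_jacobson_bot {K A : Type*} [Field K] [Ring A] [Algebra K A]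
    (ψ : A →ₐ[K] K) {a : A} (ha : a ∈ Ideal.jacobson (⊥ : Ideal A)) : ψ a = 0 := by
  have := RingHom.ker_isMaximal_of_surjective ψ fun k => ⟨algebraMap K A k, ψ.commutes k⟩
  exact (Ideal.jacobson_bot (R := A) ▸ Ring.jacobson_le_of_isMaximal (RingHom.ker ψ)) ha

theorem mem_maxGenEigenspace_mulLeft_zero_iff {K A : Type*} [CommRing K] [Ring A] [Algebra K A]
    {d v : A} :
    v ∈ Module.End.maxGenEigenspace (LinearMap.mulLeft K d) 0 ↔ ∃ k : ℕ, d ^ k * v = 0 := by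
  simp [Module.End.mem_maxGenEigenspace, LinearMap.pow_mulLeft]

section JOrder

variable {M : Type*} [Monoid M]

theorem leJ_trans {x y z : M} (hxy : leJ x y) (hyz : leJ y z) : leJ x z := by
  obtain ⟨u, v, rfl⟩ := hxy
  obtain ⟨u', v', rfl⟩ := hyz
  exact ⟨u * u', v' * v, by simp only [mul_assoc]⟩

namespace JTrivial

variable (hJ : JTrivial M)
include hJ

theorem leJ_antisymm {x y : M} (hxy : leJ x y) (hyx : leJ y x) : x = y :=
  hJ x y (Set.ext fun _ => ⟨fun h => leJ_trans h hxy, fun h => leJ_trans h hyx⟩)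

theorem isStrictOrder_ltJ : IsStrictOrder M fun x y => leJ x y ∧ x ≠ y where
  irrefl _ h := h.2 rfl
  trans _ _ _ := fun ⟨hxy, hne⟩ ⟨hyz, _⟩ =>
    ⟨leJ_trans hxy hyz, fun hxz => hne (hJ.leJ_antisymm hxy (hxz ▸ hyz))⟩

theorem mul_mul_eq_self_iff (m u v : M) : u * v * m = m ↔ u * m = m ∧ v * m = m := by
  constructor
  · intro h
    have hv : v * m = m :=
      hJ.leJ_antisymm ⟨v, 1, (mul_one _).symm⟩ ⟨u, 1, by rw [mul_one, ← mul_assoc, h]⟩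
    exact ⟨by rwa [mul_assoc, hv] at h, hv⟩
  · rintro ⟨hu, hv⟩
    rw [mul_assoc, hv, hu]

end JTrivial

theorem jTrivial_of_isIdempotentElem {L : Type*} [CommMonoid L]
    (hL : ∀ p : L, IsIdempotentElem p) : JTrivial L := by
  have absorb : ∀ {p q : L}, leJ p q → p * q = p := by
    rintro p q ⟨u, v, rfl⟩
    rw [mul_right_comm, mul_assoc u, (hL q).eq]
  intro p q hpq
  have hp : leJ p q := (Set.ext_iff.1 hpq p).1 ⟨1, 1, by simp⟩
  have hq : leJ q p := (Set.ext_iff.1 hpq q).2 ⟨1, 1, by simp⟩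
  rw [← absorb hp, mul_comm, absorb hq]

end JOrder

section StabilizerChar

variable {M : Type*} [Monoid M]

open scoped Classical in
noncomputable def stabilizerChar (K : Type*) [MulZeroOneClass K] (m : M)
    (hm : ∀ u v : M, u * v * m = m ↔ u * m = m ∧ v * m = m) : M →* K where
  toFun u := if u * m = m then 1 else 0
  map_one' := if_pos (one_mul m)
  map_mul' u v := by
    simp only [hm]
    split_ifs <;> simp_all

variable {K : Type*} [CommRing K] {m : M} {hm : ∀ u v : M, u * v * m = m ↔ u * m = m ∧ v * m = m}

theorem stabilizerChar_of_mul_eq {u : M} (hu : u * m = m) : stabilizerChar K m hm u = 1 :=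
  if_pos hu

theorem stabilizerChar_of_mul_ne {u : M} (hu : u * m ≠ m) : stabilizerChar K m hm u = 0 :=
  if_neg hu

theorem mul_of_sub_lift_stabilizerChar_smul_mem_span (d : MonoidAlgebra K M) :
    d * of K M m - lift K K M (stabilizerChar K m hm) d • of K M m ∈
      Submodule.span K (of K M '' {z | leJ z m ∧ z ≠ m}) := by
  induction d using MonoidAlgebra.induction_on with
  | of u =>
    rw [lift_of, ← map_mul]
    by_cases hu : u * m = m
    · rw [stabilizerChar_of_mul_eq hu, one_smul, hu, sub_self]
      exact zero_mem _
    · rw [stabilizerChar_of_mul_ne hu, zero_smul, sub_zero]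
      exact Submodule.subset_span ⟨u * m, ⟨⟨u, 1, (mul_one _).symm⟩, hu⟩, rfl⟩
  | add x y hx hy =>
    rw [add_mul, map_add, add_smul, add_sub_add_comm]
    exact add_mem hx hy
  | smul r x hx =>
    rw [smul_mul_assoc, map_smul, smul_assoc, ← smul_sub]
    exact Submodule.smul_mem _ r hx

end StabilizerChar

namespace JTrivial

variable {K M : Type*} [CommRing K] [Monoid M] [Finite M] (hJ : JTrivial M)
include hJ

theorem isNilpotent_of_forall_lift_stabilizerChar_eq_zero {d : MonoidAlgebra K M}
    (hd : ∀ m, lift K K M (stabilizerChar K m (hJ.mul_mul_eq_self_iff m)) d = 0) :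
    IsNilpotent d := by
  suffices h : ∀ m : M, of K M m ∈ Module.End.maxGenEigenspace (LinearMap.mulLeft K d) 0 by
    obtain ⟨k, hk⟩ := mem_maxGenEigenspace_mulLeft_zero_iff.1 (h 1)
    exact ⟨k, by rwa [map_one, mul_one] at hk⟩
  have := hJ.isStrictOrder_ltJ
  have wf := Finite.wellFounded_of_trans_of_irrefl fun x y : M => leJ x y ∧ x ≠ y
  intro m
  induction m using wf.induction with
  | _ m ih =>
    have hspan : Submodule.span K (of K M '' {z | leJ z m ∧ z ≠ m}) ≤
        Module.End.maxGenEigenspace (LinearMap.mulLeft K d) 0 :=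
      Submodule.span_le.2 (Set.image_subset_iff.2 ih)
    have hdm := mul_of_sub_lift_stabilizerChar_smul_mem_span (hm := hJ.mul_mul_eq_self_iff m) d
    rw [hd m, zero_smul, sub_zero] at hdm
    obtain ⟨k, hk⟩ := mem_maxGenEigenspace_mulLeft_zero_iff.1 (hspan hdm)
    exact mem_maxGenEigenspace_mulLeft_zero_iff.2 ⟨k + 1, by rwa [pow_succ, mul_assoc]⟩

theorem eq_zero_of_forall_lift_stabilizerChar_eq_zero (hidem : ∀ p : M, IsIdempotentElem p)
    {b : MonoidAlgebra K M}
    (hb : ∀ p, lift K K M (stabilizerChar K p (hJ.mul_mul_eq_self_iff p)) b = 0) : b = 0 := by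
  have := hJ.isStrictOrder_ltJ
  by_contra hb0
  obtain ⟨p, hp, hmax⟩ :=
    (Finite.wellFounded_of_trans_of_irrefl (Function.swap fun x y : M => leJ x y ∧ x ≠ y)).has_min
      b.coeff.support (Finsupp.support_nonempty_iff.2 (by simpa using hb0))
  have hbp := hb p
  rw [lift_apply, Finsupp.sum, Finset.sum_eq_single p, stabilizerChar_of_mul_eq (hidem p).eq,
    smul_eq_mul, mul_one] at hbp
  · exact Finsupp.mem_support_iff.1 hp hbp
  · intro q hq hqp
    have hqp' : q * p ≠ p := fun h => hmax q hq ⟨⟨1, p, by rw [one_mul, h]⟩, hqp.symm⟩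
    rw [stabilizerChar_of_mul_ne hqp', smul_zero]
  · exact fun hp' => absurd hp hp'

end JTrivial

section Commutators

variable (K : Type*) [CommRing K] (M : Type*) [Monoid M]

noncomputable def commutatorIdeal : TwoSidedIdeal (MonoidAlgebra K M) :=
  TwoSidedIdeal.span {z | ∃ g h : M, z = of K M g * of K M h - of K M h * of K M g}

def commCon : Con M :=
  conGen fun a b => ∃ g h : M, a = g * h ∧ b = h * g

variable {K M}

theorem commutatorIdeal_le_ker {R : Type*} [CommRing R] (f : MonoidAlgebra K M →+* R) :
    commutatorIdeal K M ≤ TwoSidedIdeal.ker f := by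
  refine TwoSidedIdeal.span_le.2 ?_
  rintro _ ⟨g, h, rfl⟩
  rw [SetLike.mem_coe, TwoSidedIdeal.mem_ker, map_sub, map_mul, map_mul, mul_comm, sub_self]

theorem commCon_le_ker {N : Type*} [Monoid N] (f : M →* N) (hf : ∀ g h, Commute (f g) (f h)) :
    commCon M ≤ Con.ker f := by
  refine Con.conGen_le.2 ?_
  rintro _ _ ⟨g, h, rfl, rfl⟩
  simp only [Con.ker_rel, map_mul, (hf g h).eq]

instance : CommMonoid (commCon M).Quotient where
  __ := (commCon M).monoid
  mul_comm p q := Con.induction_on₂ p q fun g h => (Con.eq _).2 (ConGen.Rel.of _ _ ⟨g, h, rfl, rfl⟩)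

instance [Finite M] : Finite (commCon M).Quotient :=
  Finite.of_surjective _ (commCon M).mk'_surjective

theorem commCon_isIdempotentElem (hgen : Submonoid.closure {e : M | IsIdempotentElem e} = ⊤)
    (p : (commCon M).Quotient) : IsIdempotentElem p := by
  obtain ⟨x, rfl⟩ := (commCon M).mk'_surjective p
  induction (hgen ▸ Submonoid.mem_top x : x ∈ Submonoid.closure _) using
    Submonoid.closure_induction with
  | mem e he => exact he.map _
  | one => rw [map_one]; exact .one
  | mul x y _ _ hx hy => rw [map_mul]; exact hx.mul hy

theorem mem_commutatorIdeal_of_mapDomain_eq_zero {a : MonoidAlgebra K M}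
    (ha : mapDomainAlgHom K K (commCon M).mk' a = 0) : a ∈ commutatorIdeal K M := by
  let q := Ideal.Quotient.mkₐ K (commutatorIdeal K M).asIdeal
  have hq : ∀ g h, Commute (q (of K M g)) (q (of K M h)) := fun g h => by
    rw [Commute, SemiconjBy, ← sub_eq_zero, ← map_mul q, ← map_mul q, ← map_sub]
    exact Ideal.Quotient.eq_zero_iff_mem.2
      (TwoSidedIdeal.mem_asIdeal.2 (TwoSidedIdeal.subset_span ⟨g, h, rfl⟩))
  let θ := lift K _ _ ((commCon M).lift (q.toMonoidHom.comp (of K M)) (commCon_le_ker _ hq))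
  have hθ : θ.comp (mapDomainAlgHom K K (commCon M).mk') = q := by
    ext; simp [θ]
  have : q a = 0 := by rw [← hθ, AlgHom.comp_apply, ha, map_zero]
  exact TwoSidedIdeal.mem_asIdeal.1 (Ideal.Quotient.eq_zero_iff_mem.1 this)

end Commutators

/-- Let `K` be a field and `M` a finite `J`-trivial monoid generated by its idempotents.
Then the Jacobson radical of `K[M]` equals the two-sided ideal generated by the commutators
`g * h - h * g` for `g, h ∈ M`. -/
theorem radical_eq_commutator_ideal (K : Type*) [Field K] {M : Type*} [Monoid M]
    [Fintype M] (hJ : JTrivial M)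
    (hgen : Submonoid.closure {e : M | IsIdempotentElem e} = ⊤) :
    ∀ a : MonoidAlgebra K M,
      a ∈ Ideal.jacobson (⊥ : Ideal (MonoidAlgebra K M)) ↔
      a ∈ TwoSidedIdeal.span {z : MonoidAlgebra K M | ∃ g h : M,
        z = MonoidAlgebra.of K M g * MonoidAlgebra.of K M h
          - MonoidAlgebra.of K M h * MonoidAlgebra.of K M g} := by
  intro a
  have hL := commCon_isIdempotentElem hgen
  have hJL := jTrivial_of_isIdempotentElem hL
  constructor
  · intro ha
    refine mem_commutatorIdeal_of_mapDomain_eq_zero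
      (hJL.eq_zero_of_forall_lift_stabilizerChar_eq_zero hL fun p => ?_)
    exact AlgHom.map_eq_zero_of_mem_jacobson_bot
      ((lift K K _ (stabilizerChar K p (hJL.mul_mul_eq_self_iff p))).comp
        (mapDomainAlgHom K K (commCon M).mk')) ha
  · intro ha
    refine Ideal.mem_jacobson_bot_of_forall_isNilpotent_mul fun y =>
      hJ.isNilpotent_of_forall_lift_stabilizerChar_eq_zero fun m => ?_
    exact commutatorIdeal_le_ker
      (lift K K M (stabilizerChar K m (hJ.mul_mul_eq_self_iff m))).toRingHom
      ((commutatorIdeal K M).mul_mem_left y a ha)
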